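/- arXiv:2006.11279 — 4 statements merged into one kernel-verified Lean document; each statement's English description precedes it below -/
import Mathlib

section
/- Problem of moments duality: Let Ω be a Borel measurable space, let φ, f₁, …, f_k : Ω → ℝ be Borel measurable functionals, set f₀ = 1 (the indicator of Ω), f̃ = (f₀, f₁, …, f_k), and for q ∈ ℝᵏ set q̃ = (1, q₁, …, q_k). Let 𝒬_{f̃} = { ∫ f̃(x) dμ(x) : μ a nonnegative Borel measure on Ω for which all components of f̃ are integrable } ⊆ ℝ^{k+1}. If q̃ is an interior point of 𝒬_{f̃}, then sup{ ∫ φ dμ : μ a nonnegative Borel measure on Ω with ∫ f̃ dμ = q̃ and φ integrable } = inf{ Σ_{i=0}^k a_i q̃_i : a ∈ ℝ^{k+1} such that Σ_{i=0}^k a_i f̃_i(x) ≥ φ(x) for all x ∈ Ω }. -/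
open MeasureTheory Filter Topology

/-!
Weak duality is integration of the pointwise inequality `φ ≤ ∑ aᵢ f̃ᵢ`. For strong duality, take
`c` above the primal value. Then `(q̃, c)` lies outside the convex cone of pairs
`(∫ f̃ dμ, w)` with `w ≤ ∫ φ dμ`, so a nonzero linear functional `(v, w) ↦ ⟪a, v⟫ + b w` is
nonnegative on that cone and nonpositive at `(q̃, c)`. Testing it on Dirac masses gives
`∑ aᵢ f̃ᵢ + b φ ≥ 0`, and on `(0, -1)` gives `b ≤ 0`. If `b < 0`, then `a / (-b)` is dual feasible
with value at most `c`. If `b = 0`, the moment vector `q̃ - t a` of some measure is available for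
small `t > 0`, because `q̃` is interior. Integrating `∑ aᵢ f̃ᵢ ≥ 0` against that measure forces
`a = 0`, which is impossible.
-/

section Separation

variable {E : Type*} [NormedAddCommGroup E] [NormedSpace ℝ E] [FiniteDimensional ℝ E]
  [Nontrivial E]

theorem exists_strongDual_ne_zero_forall_eq_of_affineSpan_ne_top {C : Set E}
    (hC : affineSpan ℝ C ≠ ⊤) : ∃ g : StrongDual ℝ E, g ≠ 0 ∧ ∀ y ∈ C, ∀ z ∈ C, g y = g z := by
  have hdir : (affineSpan ℝ C).direction ≠ ⊤ := by
    rcases C.eq_empty_or_nonempty with rfl | hne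
    · simp
    · rwa [Ne, AffineSubspace.direction_eq_top_iff_of_nonempty
        ((affineSpan_nonempty ℝ).2 hne)]
  obtain ⟨f, hf0, hdir_le⟩ := Submodule.exists_le_ker_of_lt_top _ hdir.lt_top
  refine ⟨LinearMap.toContinuousLinearMap f, fun h => hf0 ?_, fun y hy z hz => ?_⟩
  · simpa using congrArg ContinuousLinearMap.toLinearMap h
  · have := hdir_le (AffineSubspace.vsub_mem_direction (subset_affineSpan ℝ C hy)
      (subset_affineSpan ℝ C hz))
    simpa [sub_eq_zero] using this

/-- No closedness is assumed: the moment cone below need not be closed. -/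
theorem Convex.exists_strongDual_ne_zero_le_of_notMem {C : Set E} (hC : Convex ℝ C) {x : E}
    (hx : x ∉ C) : ∃ g : StrongDual ℝ E, g ≠ 0 ∧ ∀ y ∈ C, g x ≤ g y := by
  rcases (interior C).eq_empty_or_nonempty with hint | hint
  · have hflat : affineSpan ℝ C ≠ ⊤ := fun h => by
      simpa [hint] using hC.interior_nonempty_iff_affineSpan_eq_top.2 h
    obtain ⟨f, hf0, hfC⟩ := exists_strongDual_ne_zero_forall_eq_of_affineSpan_ne_top hflat
    rcases C.eq_empty_or_nonempty with rfl | ⟨y₀, hy₀⟩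
    · exact ⟨f, hf0, by simp⟩
    rcases le_total (f x) (f y₀) with h | h
    · exact ⟨f, hf0, fun y hy => h.trans (hfC y₀ hy₀ y hy).le⟩
    · exact ⟨-f, neg_ne_zero.2 hf0, fun y hy => by simpa [hfC y hy y₀ hy₀] using h⟩
  · obtain ⟨f, hf0, hf⟩ := geometric_hahn_banach_of_nonempty_interior_point hC
      (fun h => hx (interior_subset h)) hint
    exact ⟨-f, neg_ne_zero.2 hf0, fun y hy => neg_le_neg (hf y hy)⟩

theorem ConvexCone.exists_strongDual_ne_zero_nonpos_nonneg_of_notMem (K : ConvexCone ℝ E)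
    (hK : K.Pointed) {x : E} (hx : x ∉ K) :
    ∃ g : StrongDual ℝ E, g ≠ 0 ∧ g x ≤ 0 ∧ ∀ z ∈ K, 0 ≤ g z := by
  obtain ⟨g, hg0, hg⟩ := K.convex.exists_strongDual_ne_zero_le_of_notMem hx
  have hgx : g x ≤ 0 := by simpa using hg 0 hK
  refine ⟨g, hg0, hgx, fun z hz => ?_⟩
  by_contra! hgz
  have ht : 0 < (g x - 1) / g z := div_pos_of_neg_of_neg (by linarith) hgz
  have := hg _ (K.smul_mem ht hz)
  rw [map_smul, smul_eq_mul, div_mul_cancel₀ _ hgz.ne] at this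
  linarith

end Separation

theorem StrongDual.apply_prod_eq_sum {ι : Type*} [Fintype ι] [DecidableEq ι]
    (g : StrongDual ℝ ((ι → ℝ) × ℝ)) (v : ι → ℝ) (w : ℝ) :
    g (v, w) = ∑ i, g (Pi.single i 1, 0) * v i + g (0, 1) * w := by
  have hvw : ((v, w) : (ι → ℝ) × ℝ) = ∑ i, v i • (Pi.single i 1, 0) + w • (0, 1) := by
    ext <;> simp [Prod.fst_sum, Prod.snd_sum, Finset.sum_apply, Pi.single_apply]
  simp only [hvw, map_add, map_sum, map_smul, smul_eq_mul, mul_comm]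

section Moments

variable {Ω ι : Type*} [MeasurableSpace Ω]

def momentSet (F : ι → Ω → ℝ) : Set (ι → ℝ) :=
  {v | ∃ μ : Measure Ω, (∀ i, Integrable (F i) μ) ∧ ∀ i, ∫ x, F i x ∂μ = v i}

def momentCone (F : ι → Ω → ℝ) (φ : Ω → ℝ) : ConvexCone ℝ ((ι → ℝ) × ℝ) where
  carrier := {z | ∃ μ : Measure Ω, Integrable φ μ ∧ (∀ i, Integrable (F i) μ) ∧
    (∀ i, ∫ x, F i x ∂μ = z.1 i) ∧ z.2 ≤ ∫ x, φ x ∂μ}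
  smul_mem' := by
    rintro c hc z ⟨μ, hφ, hF, hmom, hz⟩
    refine ⟨ENNReal.ofReal c • μ, hφ.smul_measure ENNReal.ofReal_ne_top,
      fun i => (hF i).smul_measure ENNReal.ofReal_ne_top, fun i => ?_, ?_⟩
    · simp [integral_smul_measure, hc.le, hmom i]
    · simpa [integral_smul_measure, hc.le] using mul_le_mul_of_nonneg_left hz hc.le
  add_mem' := by
    rintro z ⟨μ, hφμ, hFμ, hmomμ, hzμ⟩ w ⟨ν, hφν, hFν, hmomν, hwν⟩
    refine ⟨μ + ν, hφμ.add_measure hφν, fun i => (hFμ i).add_measure (hFν i), fun i => ?_, ?_⟩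
    · simp [integral_add_measure (hFμ i) (hFν i), hmomμ i, hmomν i]
    · simpa [integral_add_measure hφμ hφν] using add_le_add hzμ hwν

theorem momentCone_pointed (F : ι → Ω → ℝ) (φ : Ω → ℝ) : (momentCone F φ).Pointed :=
  ⟨0, by simp, by simp, by simp, by simp⟩

theorem zero_neg_one_mem_momentCone (F : ι → Ω → ℝ) (φ : Ω → ℝ) :
    ((0, -1) : (ι → ℝ) × ℝ) ∈ momentCone F φ :=
  ⟨0, by simp, by simp, by simp, by simp⟩

theorem mk_apply_mem_momentCone {F : ι → Ω → ℝ} {φ : Ω → ℝ} (hF : ∀ i, Measurable (F i))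
    (hφ : Measurable φ) (x : Ω) : ((fun i => F i x, φ x) : (ι → ℝ) × ℝ) ∈ momentCone F φ := by
  refine ⟨Measure.dirac x, integrable_dirac' hφ.stronglyMeasurable enorm_lt_top,
    fun i => integrable_dirac' (hF i).stronglyMeasurable enorm_lt_top, fun i => ?_, ?_⟩
  · exact integral_dirac' _ x (hF i).stronglyMeasurable
  · exact (integral_dirac' _ x hφ.stronglyMeasurable).ge

variable [Fintype ι] {μ : Measure Ω} {F : ι → Ω → ℝ}

theorem integral_sum_mul (hF : ∀ i, Integrable (F i) μ) (a : ι → ℝ) :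
    ∫ x, ∑ i, a i * F i x ∂μ = ∑ i, a i * ∫ x, F i x ∂μ := by
  rw [integral_finsetSum _ fun i _ => (hF i).const_mul (a i)]
  simp_rw [integral_const_mul]

theorem integral_le_sum_mul_integral {φ : Ω → ℝ} (hφ : Integrable φ μ)
    (hF : ∀ i, Integrable (F i) μ) {a : ι → ℝ} (ha : ∀ x, φ x ≤ ∑ i, a i * F i x) :
    ∫ x, φ x ∂μ ≤ ∑ i, a i * ∫ x, F i x ∂μ := by
  rw [← integral_sum_mul hF a]
  exact integral_mono hφ (integrable_finsetSum _ fun i _ => (hF i).const_mul (a i)) ha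

theorem eq_zero_of_mem_interior_momentSet {v : ι → ℝ} (hv : v ∈ interior (momentSet F))
    {a : ι → ℝ} (ha : ∀ x, 0 ≤ ∑ i, a i * F i x) (hav : ∑ i, a i * v i ≤ 0) : a = 0 := by
  have hnear : ∀ᶠ t in 𝓝[>] (0 : ℝ), v - t • a ∈ momentSet F := by
    have : Tendsto (fun t : ℝ => v - t • a) (𝓝 0) (𝓝 v) :=
      (continuous_const.sub (continuous_id.smul continuous_const)).tendsto' _ _ (by simp)
    exact (this.mono_left nhdsWithin_le_nhds).eventually (mem_interior_iff_mem_nhds.1 hv)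
  obtain ⟨t, ⟨μ, hFμ, hmom⟩, ht⟩ := (hnear.and self_mem_nhdsWithin).exists
  have hpos : 0 ≤ a ⬝ᵥ (v - t • a) := by
    have := integral_nonneg (μ := μ) (f := fun x => ∑ i, a i * F i x) ha
    simpa only [integral_sum_mul hFμ, hmom, dotProduct] using this
  have haa : a ⬝ᵥ a ≤ 0 := by
    rw [dotProduct_sub, dotProduct_smul, smul_eq_mul] at hpos
    nlinarith [show a ⬝ᵥ v ≤ 0 from hav, show 0 < t from ht]
  exact dotProduct_self_eq_zero.1 (le_antisymm haa (dotProduct_self_star_nonneg a))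

theorem exists_dual_le_of_notMem_momentCone {φ : Ω → ℝ}
    (hF : ∀ i, Measurable (F i)) (hφ : Measurable φ) {v : ι → ℝ}
    (hv : v ∈ interior (momentSet F)) {c : ℝ} (hvc : (v, c) ∉ momentCone F φ) :
    ∃ a : ι → ℝ, (∀ x, φ x ≤ ∑ i, a i * F i x) ∧ ∑ i, a i * v i ≤ c := by
  classical
  obtain ⟨g, hg0, hgvc, hgK⟩ := (momentCone F φ).exists_strongDual_ne_zero_nonpos_nonneg_of_notMem
    (momentCone_pointed F φ) hvc
  set a : ι → ℝ := fun i => g (Pi.single i 1, 0)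
  set b : ℝ := g (0, 1)
  have hg : ∀ u w, g (u, w) = ∑ i, a i * u i + b * w := g.apply_prod_eq_sum
  have hgen : ∀ x, 0 ≤ ∑ i, a i * F i x + b * φ x := fun x => by
    simpa only [hg] using hgK _ (mk_apply_mem_momentCone hF hφ x)
  have hb : b ≤ 0 := by simpa [hg] using hgK _ (zero_neg_one_mem_momentCone F φ)
  rw [hg] at hgvc
  rcases hb.lt_or_eq with hb | hb
  · refine ⟨fun i => a i / -b, fun x => ?_, ?_⟩
    · simp_rw [div_mul_eq_mul_div, ← Finset.sum_div]
      rw [le_div_iff₀ (neg_pos.2 hb)]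
      linarith [hgen x]
    · simp_rw [div_mul_eq_mul_div, ← Finset.sum_div]
      rw [div_le_iff₀ (neg_pos.2 hb)]
      linarith
  · have ha : a = 0 := eq_zero_of_mem_interior_momentSet hv (a := a)
      (fun x => by simpa [hb] using hgen x) (by simpa [hb] using hgvc)
    refine absurd (ContinuousLinearMap.ext fun z => ?_) hg0
    simp [hg z.1 z.2, ha, hb]

end Moments

/-- **Problem of moments duality.**
Let `φ, f₁, …, f_k` be Borel measurable functionals on a measurable space `Ω`,
set `f₀ = 1`, `f̃ = (f₀, …, f_k)` and `q̃ = (1, q₁, …, q_k)`.  If `q̃` is an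
interior point of `𝒬_{f̃} = { ∫ f̃ dμ : μ nonnegative measure with f̃ integrable }`,
then the worst-case moment problem `sup{ ∫ φ dμ : ∫ f̃ dμ = q̃ }` equals its dual
`inf{ Σᵢ aᵢ q̃ᵢ : Σᵢ aᵢ f̃ᵢ(x) ≥ φ(x) for all x }` (values taken in `EReal`, with
`sup ∅ = −∞` and `inf ∅ = +∞`). -/
theorem stmt_2 {Ω : Type*} [MeasurableSpace Ω] {k : ℕ}
    (φ : Ω → ℝ) (f : Fin k → Ω → ℝ) (q : Fin k → ℝ)
    (hφ : Measurable φ) (hf : ∀ i, Measurable (f i)) :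
    let ft : Fin (k + 1) → Ω → ℝ := Fin.cons (fun _ => 1) f
    let qt : Fin (k + 1) → ℝ := Fin.cons 1 q
    let Qf : Set (Fin (k + 1) → ℝ) :=
      { v | ∃ μ : Measure Ω, (∀ i, Integrable (ft i) μ) ∧
          ∀ i, (∫ x, ft i x ∂μ) = v i }
    qt ∈ interior Qf →
    sSup { y : EReal | ∃ μ : Measure Ω, Integrable φ μ ∧
        (∀ i, Integrable (ft i) μ) ∧ (∀ i, (∫ x, ft i x ∂μ) = qt i) ∧
        y = ((∫ x, φ x ∂μ : ℝ) : EReal) }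
      = sInf { y : EReal | ∃ a : Fin (k + 1) → ℝ,
          (∀ x, φ x ≤ ∑ i, a i * ft i x) ∧
          y = ((∑ i, a i * qt i : ℝ) : EReal) } := by
  intro ft qt Qf hq
  have hft : ∀ i, Measurable (ft i) := Fin.cases measurable_const hf
  refine le_antisymm (sSup_le ?_) (EReal.le_of_forall_lt_iff_le.1 fun c hc => ?_)
  · rintro _ ⟨μ, hφμ, hftμ, hmom, rfl⟩
    refine le_sInf ?_
    rintro _ ⟨a, ha, rfl⟩
    have hweak := integral_le_sum_mul_integral hφμ hftμ ha
    simp only [hmom] at hweak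
    exact EReal.coe_le_coe_iff.2 hweak
  · have hqc : (qt, c) ∉ momentCone ft φ := fun ⟨μ, hφμ, hftμ, hmom, hcμ⟩ =>
      hc.not_ge ((EReal.coe_le_coe_iff.2 hcμ).trans (le_sSup ⟨μ, hφμ, hftμ, hmom, rfl⟩))
    obtain ⟨a, ha, hac⟩ := exists_dual_le_of_notMem_momentCone hft hφ hq hqc
    exact sInf_le_of_le ⟨a, ha, rfl⟩ (EReal.coe_le_coe_iff.2 hac)
end

section
/- Worst-case inner and middle problem: Let s₁, …, s_N ∈ ℝⁿ with empirical measure Q_N, sample mean s̄ and empirical covariance Σ. Let φ ∈ ℝⁿ with φ ≠ 0, let δ > 0, and put μ̄ = φ·s̄. Then the maximum over all α ∈ ℝ with (α − μ̄)² ≤ δ·‖φ‖₂² of the quantity sup{ E^Q[(φ·S)²] − α² : Q ∈ U_δ(Q_N), E^Q[φ·S] = α } equals (√(φᵀΣφ) + √δ·‖φ‖₂)², and the outer maximum is attained at α* = μ̄. -/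
open MeasureTheory
open scoped ENNReal BigOperators

/-- Euclidean dot product on `Fin n → ℝ`. -/
noncomputable def eDot {n : ℕ} (a b : Fin n → ℝ) : ℝ := ∑ i, a i * b i

/-- Transport cost of a coupling `π` for the quadratic cost `c(u,v) = ‖u − v‖₂²`. -/
noncomputable def transportCost {n : ℕ}
    (π : Measure ((Fin n → ℝ) × (Fin n → ℝ))) : ℝ≥0∞ :=
  ∫⁻ p, ENNReal.ofReal (∑ i, (p.1 i - p.2 i) ^ 2) ∂π

/-- Optimal transport cost `D_c(Q, Q')` with quadratic cost `c(u,v) = ‖u − v‖₂²`. -/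
noncomputable def otCost {n : ℕ} (Q Q' : Measure (Fin n → ℝ)) : ℝ≥0∞ :=
  sInf { r | ∃ π : Measure ((Fin n → ℝ) × (Fin n → ℝ)),
      IsProbabilityMeasure π ∧ π.map Prod.fst = Q ∧ π.map Prod.snd = Q' ∧
      r = transportCost π }

/-- Empirical measure `Q_N = (1/N)·Σᵢ δ_{sᵢ}` of the sample points `s₁, …, s_N`. -/
noncomputable def empiricalMeasure {n N : ℕ} (s : Fin N → (Fin n → ℝ)) :
    Measure (Fin n → ℝ) :=
  (N : ℝ≥0∞)⁻¹ • ∑ i, Measure.dirac (s i)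


/-- Optimal value of the worst-case inner problem:
`sup{ E^Q[(φ·S)²] − α² : Q ∈ U_δ(Q_N), E^Q[φ·S] = α }`. -/
noncomputable def innerWorst {n N : ℕ} (s : Fin N → (Fin n → ℝ))
    (φ : Fin n → ℝ) (δ α : ℝ) : ℝ :=
  sSup { v | ∃ Q : Measure (Fin n → ℝ), IsProbabilityMeasure Q ∧
      otCost Q (empiricalMeasure s) ≤ ENNReal.ofReal δ ∧
      Integrable (fun x => eDot φ x) Q ∧ Integrable (fun x => (eDot φ x) ^ 2) Q ∧
      (∫ x, eDot φ x ∂Q) = α ∧ v = (∫ x, (eDot φ x) ^ 2 ∂Q) - α ^ 2 }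

open ProbabilityTheory

/-!
Write `F x = φ·x`. If `π` couples `Q` with `Q_N` at cost at most `ε`, then Cauchy–Schwarz in
`ℝⁿ` gives `E_π[(F x - F y)²] ≤ ε‖φ‖²`, and the triangle inequality in `L²(π)` applied to
`F x = F y + (F x - F y)` gives `√Var_Q F ≤ √Var_{Q_N} F + √(ε‖φ‖²)`. Such couplings exist for
every `ε > δ`, so letting `ε ↓ δ` bounds the inner problem for every mean `α`, because
`E^Q[F²] - α²` is the variance of `F` under `Q`.

The bound is attained with mean `μ̄`: move each sample point `sᵢ` along `φ` so that its
deviation `F sᵢ - μ̄` is scaled by `1 + r`, and split it into two copies shifted by `± ρ`, where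
`r² V + ρ² = δ‖φ‖²` (the transport budget) and `(1 + r)² V + ρ² = (√V + √(δ‖φ‖²))²`; the split
is only needed when `V = 0`.
-/

section DiscreteUniform

variable {ι κ α β : Type*} [Fintype ι] [MeasurableSpace α] [MeasurableSpace β]

noncomputable def discreteUniform (x : ι → α) : Measure α :=
  (Fintype.card ι : ℝ≥0∞)⁻¹ • ∑ i, Measure.dirac (x i)

instance isProbabilityMeasure_discreteUniform [Nonempty ι] (x : ι → α) :
    IsProbabilityMeasure (discreteUniform x) := by
  constructor
  simp [discreteUniform, ENNReal.inv_mul_cancel]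

lemma empiricalMeasure_eq_discreteUniform {n N : ℕ} (s : Fin N → Fin n → ℝ) :
    empiricalMeasure s = discreteUniform s := by
  simp [empiricalMeasure, discreteUniform]

lemma map_discreteUniform {g : α → β} (hg : Measurable g) (x : ι → α) :
    (discreteUniform x).map g = discreteUniform (g ∘ x) := by
  rw [discreteUniform, Measure.map_smul, ← Measure.mapₗ_apply_of_measurable hg, map_sum]
  simp [discreteUniform, Measure.mapₗ_apply_of_measurable hg, hg]

lemma discreteUniform_comp_fst [Fintype κ] [Nonempty κ] (x : ι → α) :
    discreteUniform (fun q : ι × κ => x q.1) = discreteUniform x := by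
  simp only [discreteUniform, Fintype.sum_prod_type, Finset.sum_const, Finset.card_univ,
    Finset.smul_sum, Fintype.card_prod, Nat.cast_mul]
  congr 1; ext1 i
  rw [← Nat.cast_smul_eq_nsmul ℝ≥0∞, smul_smul, ENNReal.mul_inv (by simp) (by simp), mul_assoc,
    ENNReal.inv_mul_cancel (by simp) (by simp), mul_one]

variable [MeasurableSingletonClass α]

lemma integrable_discreteUniform [Nonempty ι] (f : α → ℝ) (x : ι → α) :
    Integrable f (discreteUniform x) :=
  (integrable_finsetSum_measure.2 fun i _ => integrable_dirac (by simp)).smul_measure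
    (by simp)

lemma integral_discreteUniform (f : α → ℝ) (x : ι → α) :
    ∫ a, f a ∂discreteUniform x = (Fintype.card ι : ℝ)⁻¹ * ∑ i, f (x i) := by
  rw [discreteUniform, integral_smul_measure,
    integral_finsetSum_measure fun i _ => integrable_dirac (by simp)]
  simp [ENNReal.toReal_inv]

lemma variance_discreteUniform [Nonempty ι] (f : α → ℝ) (x : ι → α) :
    Var[f; discreteUniform x] = (Fintype.card ι : ℝ)⁻¹ *
      ∑ i, (f (x i) - ∫ a, f a ∂discreteUniform x) ^ 2 := by
  rw [variance_eq_integral (integrable_discreteUniform f x).aemeasurable,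
    integral_discreteUniform]

lemma sum_sub_integral_discreteUniform [Nonempty ι] (f : α → ℝ) (x : ι → α) :
    ∑ i, (f (x i) - ∫ a, f a ∂discreteUniform x) = 0 := by
  rw [Finset.sum_sub_distrib, integral_discreteUniform, Finset.sum_const, Finset.card_univ,
    nsmul_eq_mul, mul_inv_cancel_left₀ (by positivity), sub_self]

end DiscreteUniform

section Minkowski

variable {Ω : Type*} [MeasurableSpace Ω] {μ : Measure Ω}

lemma MeasureTheory.MemLp.sqrt_integral_sq_eq {f : Ω → ℝ} (hf : MemLp f 2 μ) :
    √(∫ ω, f ω ^ 2 ∂μ) = (eLpNorm f 2 μ).toReal := by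
  rw [hf.eLpNorm_eq_integral_rpow_norm two_ne_zero ENNReal.ofNat_ne_top,
    ENNReal.toReal_ofReal (by positivity), Real.sqrt_eq_rpow]
  simp

lemma sqrt_integral_add_sq_le {f g : Ω → ℝ} (hf : MemLp f 2 μ) (hg : MemLp g 2 μ) :
    √(∫ ω, (f ω + g ω) ^ 2 ∂μ) ≤ √(∫ ω, f ω ^ 2 ∂μ) + √(∫ ω, g ω ^ 2 ∂μ) := by
  have hfg := (hf.add hg).sqrt_integral_sq_eq
  rw [Pi.add_def] at hfg
  rw [hfg, hf.sqrt_integral_sq_eq, hg.sqrt_integral_sq_eq,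
    ← ENNReal.toReal_add hf.eLpNorm_ne_top hg.eLpNorm_ne_top]
  exact ENNReal.toReal_mono (by simp [hf.eLpNorm_ne_top, hg.eLpNorm_ne_top])
    (eLpNorm_add_le hf.1 hg.1 one_le_two)

lemma sqrt_variance_add_le [IsProbabilityMeasure μ] {X Y : Ω → ℝ} (hX : MemLp X 2 μ)
    (hY : MemLp Y 2 μ) : √Var[X + Y; μ] ≤ √Var[X; μ] + √Var[Y; μ] := by
  have hcenter : ∀ ω, (X + Y) ω - μ[X + Y] = (X ω - μ[X]) + (Y ω - μ[Y]) := fun ω => by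
    rw [integral_add' (hX.integrable one_le_two) (hY.integrable one_le_two), Pi.add_apply]
    ring
  simp only [variance_eq_integral hX.aemeasurable, variance_eq_integral hY.aemeasurable,
    variance_eq_integral (hX.add hY).aemeasurable, hcenter]
  exact sqrt_integral_add_sq_le (hX.sub (memLp_const _)) (hY.sub (memLp_const _))

end Minkowski

section Transport

variable {n : ℕ}

lemma continuous_eDot (φ : Fin n → ℝ) : Continuous (eDot φ) := by
  unfold eDot; fun_prop

lemma sq_eDot_sub_le (φ x y : Fin n → ℝ) :
    (eDot φ x - eDot φ y) ^ 2 ≤ (∑ i, φ i ^ 2) * ∑ i, (x i - y i) ^ 2 := by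
  simp only [eDot, ← Finset.sum_sub_distrib, ← mul_sub]
  exact Finset.sum_mul_sq_le_sq_mul_sq _ _ _

lemma integral_sq_eDot_sub_le {π : Measure ((Fin n → ℝ) × (Fin n → ℝ))} (φ : Fin n → ℝ)
    {ε : ℝ} (hε0 : 0 ≤ ε) (hε : transportCost π ≤ ENNReal.ofReal ε)
    (hint : Integrable (fun p => (eDot φ p.1 - eDot φ p.2) ^ 2) π) :
    ∫ p, (eDot φ p.1 - eDot φ p.2) ^ 2 ∂π ≤ ε * ∑ i, φ i ^ 2 := by
  have hnsq : 0 ≤ ∑ i, φ i ^ 2 := by positivity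
  rw [← ENNReal.ofReal_le_ofReal_iff (by positivity),
    ofReal_integral_eq_lintegral_ofReal hint (.of_forall fun _ => sq_nonneg _)]
  calc ∫⁻ p, ENNReal.ofReal ((eDot φ p.1 - eDot φ p.2) ^ 2) ∂π
      ≤ ∫⁻ p, ENNReal.ofReal (∑ i, φ i ^ 2) * ENNReal.ofReal (∑ i, (p.1 i - p.2 i) ^ 2) ∂π :=
        lintegral_mono fun p => by
          rw [← ENNReal.ofReal_mul hnsq]
          exact ENNReal.ofReal_le_ofReal (sq_eDot_sub_le φ p.1 p.2)
    _ = ENNReal.ofReal (∑ i, φ i ^ 2) * transportCost π := by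
        rw [lintegral_const_mul' _ _ ENNReal.ofReal_ne_top, transportCost]
    _ ≤ ENNReal.ofReal (ε * ∑ i, φ i ^ 2) := by
        rw [mul_comm ε, ENNReal.ofReal_mul hnsq]
        gcongr

lemma sqrt_variance_le_of_coupling {Q Q' : Measure (Fin n → ℝ)}
    {π : Measure ((Fin n → ℝ) × (Fin n → ℝ))} [IsProbabilityMeasure π]
    (hfst : π.map Prod.fst = Q) (hsnd : π.map Prod.snd = Q') (φ : Fin n → ℝ)
    (hQ : MemLp (eDot φ) 2 Q) (hQ' : MemLp (eDot φ) 2 Q')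
    {ε : ℝ} (hε0 : 0 ≤ ε) (hε : transportCost π ≤ ENNReal.ofReal ε) :
    √Var[eDot φ; Q] ≤ √Var[eDot φ; Q'] + √(ε * ∑ i, φ i ^ 2) := by
  subst hfst hsnd
  have hF : MemLp (fun p => eDot φ p.1) 2 π := hQ.comp_of_map measurable_fst.aemeasurable
  have hG : MemLp (fun p => eDot φ p.2) 2 π := hQ'.comp_of_map measurable_snd.aemeasurable
  have hD := hF.sub hG
  rw [variance_map hQ.aemeasurable measurable_fst.aemeasurable,
    variance_map hQ'.aemeasurable measurable_snd.aemeasurable]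
  have hsplit : eDot φ ∘ Prod.fst
      = (fun p => eDot φ p.2) + ((fun p => eDot φ p.1) - fun p => eDot φ p.2) := by
    rw [add_sub_cancel]; rfl
  calc √Var[eDot φ ∘ Prod.fst; π]
      ≤ √Var[eDot φ ∘ Prod.snd; π] + √Var[(fun p => eDot φ p.1) - fun p => eDot φ p.2; π] := by
        rw [hsplit]; exact sqrt_variance_add_le hG hD
    _ ≤ √Var[eDot φ ∘ Prod.snd; π] + √(ε * ∑ i, φ i ^ 2) := by
        gcongr
        exact (variance_le_expectation_sq hD.1).trans
          (integral_sq_eDot_sub_le φ hε0 hε hD.integrable_sq)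

lemma otCost_le_transportCost {Q Q' : Measure (Fin n → ℝ)}
    {π : Measure ((Fin n → ℝ) × (Fin n → ℝ))} [IsProbabilityMeasure π]
    (hfst : π.map Prod.fst = Q) (hsnd : π.map Prod.snd = Q') :
    otCost Q Q' ≤ transportCost π :=
  sInf_le ⟨π, ‹_›, hfst, hsnd, rfl⟩

lemma sqrt_variance_le_of_otCost_le {Q Q' : Measure (Fin n → ℝ)} (φ : Fin n → ℝ)
    (hQ : MemLp (eDot φ) 2 Q) (hQ' : MemLp (eDot φ) 2 Q') {δ : ℝ} (hδ : 0 ≤ δ)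
    (hc : otCost Q Q' ≤ ENNReal.ofReal δ) :
    √Var[eDot φ; Q] ≤ √Var[eDot φ; Q'] + √(δ * ∑ i, φ i ^ 2) := by
  have hcont : Continuous fun ε : ℝ => √Var[eDot φ; Q'] + √(ε * ∑ i, φ i ^ 2) := by fun_prop
  refine ge_of_tendsto ((hcont.tendsto δ).mono_left (nhdsWithin_le_nhds (s := Set.Ioi δ)))
    (eventually_nhdsWithin_of_forall fun ε (hε : δ < ε) => ?_)
  obtain ⟨_, ⟨π, hπ, hfst, hsnd, rfl⟩, hlt⟩ :=
    sInf_lt_iff.1 (hc.trans_lt ((ENNReal.ofReal_lt_ofReal_iff (hδ.trans_lt hε)).2 hε))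
  exact sqrt_variance_le_of_coupling hfst hsnd φ hQ hQ' (hδ.trans hε.le) hlt.le

end Transport

section Split

variable {ι : Type*} [Fintype ι]

lemma sum_prod_bool_mul_add_sign (c : ℝ) (u : ι → ℝ) (ρ : ℝ) :
    ∑ q : ι × Bool, (c * u q.1 + if q.2 then ρ else -ρ) = 2 * c * ∑ i, u i := by
  simp only [Fintype.sum_prod_type, Fintype.sum_bool, if_true, Bool.false_eq_true, if_false,
    Finset.mul_sum]
  exact Finset.sum_congr rfl fun _ _ => by ring

lemma sum_prod_bool_mul_add_sign_sq (c : ℝ) (u : ι → ℝ) (ρ : ℝ) :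
    ∑ q : ι × Bool, (c * u q.1 + if q.2 then ρ else -ρ) ^ 2
      = 2 * c ^ 2 * ∑ i, u i ^ 2 + 2 * Fintype.card ι * ρ ^ 2 := by
  have hpair : ∀ i, (c * u i + ρ) ^ 2 + (c * u i + -ρ) ^ 2 = 2 * c ^ 2 * u i ^ 2 + 2 * ρ ^ 2 :=
    fun i => by ring
  simp only [Fintype.sum_prod_type, Fintype.sum_bool, if_true, Bool.false_eq_true, if_false,
    hpair, Finset.sum_add_distrib, ← Finset.mul_sum, Finset.sum_const, Finset.card_univ,
    nsmul_eq_mul]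
  ring

lemma exists_split_params {V K : ℝ} (hV : 0 ≤ V) (hK : 0 ≤ K) :
    ∃ r ρ : ℝ, r ^ 2 * V + ρ ^ 2 = K ∧ (1 + r) ^ 2 * V + ρ ^ 2 = (√V + √K) ^ 2 := by
  rcases hV.eq_or_lt with rfl | hV
  · exact ⟨0, √K, by simp [hK], by simp [hK]⟩
  · refine ⟨√K / √V, 0, ?_, ?_⟩
    · rw [div_pow, Real.sq_sqrt hK, Real.sq_sqrt hV.le]
      field_simp
      ring
    · have hsV : √V ≠ 0 := by positivity
      calc (1 + √K / √V) ^ 2 * V + 0 ^ 2 = ((1 + √K / √V) * √V) ^ 2 := by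
            rw [mul_pow, Real.sq_sqrt hV.le]; ring
        _ = (√V + √K) ^ 2 := by rw [add_mul, one_mul, div_mul_cancel₀ _ hsV]

end Split

section Attainment
variable {n N : ℕ}

lemma eDot_add_smul (φ x : Fin n → ℝ) (c : ℝ) :
    eDot φ (x + c • φ) = eDot φ x + c * ∑ i, φ i ^ 2 := by
  simp only [eDot, Pi.add_apply, Pi.smul_apply, smul_eq_mul, Finset.mul_sum,
    ← Finset.sum_add_distrib]
  exact Finset.sum_congr rfl fun _ _ => by ring

lemma sum_sq_add_smul_sub (φ x : Fin n → ℝ) (c : ℝ) :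
    ∑ i, ((x + c • φ) i - x i) ^ 2 = c ^ 2 * ∑ i, φ i ^ 2 := by
  simp only [Pi.add_apply, Pi.smul_apply, smul_eq_mul, add_sub_cancel_left, Finset.mul_sum]
  exact Finset.sum_congr rfl fun _ _ => by ring

lemma sum_sq_ne_zero_of_ne_zero {φ : Fin n → ℝ} (hφ : φ ≠ 0) : ∑ i, φ i ^ 2 ≠ 0 := by
  rw [Ne, Finset.sum_eq_zero_iff_of_nonneg fun i _ => sq_nonneg (φ i)]
  simpa [funext_iff] using hφ

noncomputable def sampleDeviation (s : Fin N → Fin n → ℝ) (φ : Fin n → ℝ) (i : Fin N) : ℝ :=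
  eDot φ (s i) - ∫ x, eDot φ x ∂empiricalMeasure s

noncomputable def splitSample (s : Fin N → Fin n → ℝ) (φ : Fin n → ℝ) (r ρ : ℝ)
    (q : Fin N × Bool) : Fin n → ℝ :=
  s q.1 + ((r * sampleDeviation s φ q.1 + if q.2 then ρ else -ρ) / ∑ i, φ i ^ 2) • φ

variable (s : Fin N → Fin n → ℝ) {φ : Fin n → ℝ} (r ρ : ℝ)

lemma sum_sampleDeviation (hN : 0 < N) (φ : Fin n → ℝ) : ∑ i, sampleDeviation s φ i = 0 := by
  have : Nonempty (Fin N) := ⟨⟨0, hN⟩⟩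
  simp only [sampleDeviation, empiricalMeasure_eq_discreteUniform]
  exact sum_sub_integral_discreteUniform _ _

lemma variance_eDot_empiricalMeasure (hN : 0 < N) (φ : Fin n → ℝ) :
    Var[eDot φ; empiricalMeasure s] = (N : ℝ)⁻¹ * ∑ i, sampleDeviation s φ i ^ 2 := by
  have : Nonempty (Fin N) := ⟨⟨0, hN⟩⟩
  simp only [sampleDeviation, empiricalMeasure_eq_discreteUniform, variance_discreteUniform,
    Fintype.card_fin]

lemma eDot_splitSample_sub (hφ : φ ≠ 0) (q : Fin N × Bool) :
    eDot φ (splitSample s φ r ρ q) - ∫ x, eDot φ x ∂empiricalMeasure s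
      = (1 + r) * sampleDeviation s φ q.1 + if q.2 then ρ else -ρ := by
  rw [splitSample, eDot_add_smul, div_mul_cancel₀ _ (sum_sq_ne_zero_of_ne_zero hφ),
    sampleDeviation]
  ring

lemma sum_sq_splitSample_sub (hφ : φ ≠ 0) (q : Fin N × Bool) :
    ∑ i, (splitSample s φ r ρ q i - s q.1 i) ^ 2
      = (r * sampleDeviation s φ q.1 + if q.2 then ρ else -ρ) ^ 2 / ∑ i, φ i ^ 2 := by
  have := sum_sq_ne_zero_of_ne_zero hφ
  rw [splitSample, sum_sq_add_smul_sub]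
  field_simp

lemma card_fin_prod_bool (N : ℕ) : (Fintype.card (Fin N × Bool) : ℝ) = 2 * N := by
  simp [mul_comm]

lemma integral_eDot_splitSample (hN : 0 < N) (hφ : φ ≠ 0) :
    ∫ x, eDot φ x ∂discreteUniform (splitSample s φ r ρ) = ∫ x, eDot φ x ∂empiricalMeasure s := by
  have : Nonempty (Fin N) := ⟨⟨0, hN⟩⟩
  have hsum : ∑ q, (eDot φ (splitSample s φ r ρ q) - ∫ x, eDot φ x ∂empiricalMeasure s) = 0 := by
    simp only [eDot_splitSample_sub s r ρ hφ]
    rw [sum_prod_bool_mul_add_sign, sum_sampleDeviation s hN, mul_zero]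
  rw [Finset.sum_sub_distrib, Finset.sum_const, Finset.card_univ, nsmul_eq_mul,
    sub_eq_zero] at hsum
  rw [integral_discreteUniform, hsum, inv_mul_cancel_left₀ (by positivity)]

lemma variance_eDot_splitSample (hN : 0 < N) (hφ : φ ≠ 0) :
    Var[eDot φ; discreteUniform (splitSample s φ r ρ)]
      = (1 + r) ^ 2 * Var[eDot φ; empiricalMeasure s] + ρ ^ 2 := by
  have : Nonempty (Fin N) := ⟨⟨0, hN⟩⟩
  rw [variance_eq_integral (integrable_discreteUniform _ _).aemeasurable,
    integral_eDot_splitSample s r ρ hN hφ, integral_discreteUniform]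
  simp only [eDot_splitSample_sub s r ρ hφ]
  rw [sum_prod_bool_mul_add_sign_sq, card_fin_prod_bool, Fintype.card_fin,
    variance_eDot_empiricalMeasure s hN]
  field_simp

lemma transportCost_splitSample (hN : 0 < N) (hφ : φ ≠ 0) :
    transportCost (discreteUniform fun q => (splitSample s φ r ρ q, s q.1))
      = ENNReal.ofReal ((r ^ 2 * Var[eDot φ; empiricalMeasure s] + ρ ^ 2) / ∑ i, φ i ^ 2) := by
  have : Nonempty (Fin N) := ⟨⟨0, hN⟩⟩
  rw [transportCost, ← ofReal_integral_eq_lintegral_ofReal (integrable_discreteUniform _ _)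
    (.of_forall fun _ => by positivity), integral_discreteUniform]
  simp only [sum_sq_splitSample_sub s r ρ hφ, ← Finset.sum_div]
  rw [sum_prod_bool_mul_add_sign_sq, card_fin_prod_bool, Fintype.card_fin,
    variance_eDot_empiricalMeasure s hN]
  congr 1
  field_simp

lemma exists_otCost_le_variance_eq (hN : 0 < N) (hφ : φ ≠ 0) {δ : ℝ}
    (hrρ : r ^ 2 * Var[eDot φ; empiricalMeasure s] + ρ ^ 2 = δ * ∑ i, φ i ^ 2) :
    ∃ Q : Measure (Fin n → ℝ), IsProbabilityMeasure Q ∧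
      otCost Q (empiricalMeasure s) ≤ ENNReal.ofReal δ ∧
      Integrable (fun x => eDot φ x) Q ∧ Integrable (fun x => eDot φ x ^ 2) Q ∧
      ∫ x, eDot φ x ∂Q = ∫ x, eDot φ x ∂empiricalMeasure s ∧
      Var[eDot φ; Q] = (1 + r) ^ 2 * Var[eDot φ; empiricalMeasure s] + ρ ^ 2 := by
  have : Nonempty (Fin N) := ⟨⟨0, hN⟩⟩
  have hfst := map_discreteUniform measurable_fst fun q => (splitSample s φ r ρ q, s q.1)
  have hsnd := (map_discreteUniform measurable_snd fun q => (splitSample s φ r ρ q, s q.1)).trans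
    ((discreteUniform_comp_fst s).trans (empiricalMeasure_eq_discreteUniform s).symm)
  refine ⟨discreteUniform (splitSample s φ r ρ), inferInstance, ?_,
    integrable_discreteUniform _ _, integrable_discreteUniform _ _,
    integral_eDot_splitSample s r ρ hN hφ, variance_eDot_splitSample s r ρ hN hφ⟩
  rw [← mul_div_cancel_right₀ δ (sum_sq_ne_zero_of_ne_zero hφ), ← hrρ,
    ← transportCost_splitSample s r ρ hN hφ]
  exact otCost_le_transportCost hfst hsnd

end Attainment

section InnerProblem
variable {n N : ℕ}

lemma integral_eDot_empiricalMeasure (s : Fin N → Fin n → ℝ) (φ : Fin n → ℝ) :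
    ∫ x, eDot φ x ∂empiricalMeasure s = eDot φ fun j => (N : ℝ)⁻¹ * ∑ i, s i j := by
  rw [empiricalMeasure_eq_discreteUniform, integral_discreteUniform, Fintype.card_fin]
  simp only [eDot, Finset.mul_sum]
  rw [Finset.sum_comm]
  exact Finset.sum_congr rfl fun _ _ => Finset.sum_congr rfl fun _ _ => by ring

lemma memLp_eDot_of_integrable_sq {Q : Measure (Fin n → ℝ)} (φ : Fin n → ℝ)
    (hsq : Integrable (fun x => eDot φ x ^ 2) Q) : MemLp (eDot φ) 2 Q :=
  (memLp_two_iff_integrable_sq (continuous_eDot φ).aestronglyMeasurable).2 hsq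

lemma integral_sq_sub_sq_le_of_otCost_le (hN : 0 < N) (s : Fin N → Fin n → ℝ)
    (φ : Fin n → ℝ) {δ : ℝ} (hδ : 0 ≤ δ) {Q : Measure (Fin n → ℝ)} [IsProbabilityMeasure Q]
    (hc : otCost Q (empiricalMeasure s) ≤ ENNReal.ofReal δ)
    (hsq : Integrable (fun x => eDot φ x ^ 2) Q) {α : ℝ} (hα : ∫ x, eDot φ x ∂Q = α) :
    ∫ x, eDot φ x ^ 2 ∂Q - α ^ 2
      ≤ (√Var[eDot φ; empiricalMeasure s] + √(δ * ∑ i, φ i ^ 2)) ^ 2 := by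
  have : Nonempty (Fin N) := ⟨⟨0, hN⟩⟩
  have hQ := memLp_eDot_of_integrable_sq φ hsq
  have hQN : MemLp (eDot φ) 2 (empiricalMeasure s) := by
    rw [empiricalMeasure_eq_discreteUniform]
    exact memLp_eDot_of_integrable_sq φ (integrable_discreteUniform _ _)
  have hvar : Var[eDot φ; Q] = ∫ x, eDot φ x ^ 2 ∂Q - α ^ 2 := hα ▸ variance_eq_sub hQ
  rw [← hvar, ← Real.sqrt_le_left (by positivity)]
  exact sqrt_variance_le_of_otCost_le φ hQ hQN hδ hc

lemma innerWorst_le (hN : 0 < N) (s : Fin N → Fin n → ℝ) (φ : Fin n → ℝ) {δ : ℝ}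
    (hδ : 0 ≤ δ) (α : ℝ) :
    innerWorst s φ δ α ≤ (√Var[eDot φ; empiricalMeasure s] + √(δ * ∑ i, φ i ^ 2)) ^ 2 :=
  Real.sSup_le (by
    rintro _ ⟨Q, hQ, hc, -, hsq, hα, rfl⟩
    exact integral_sq_sub_sq_le_of_otCost_le hN s φ hδ hc hsq hα) (sq_nonneg _)

lemma innerWorst_mean_eq (hN : 0 < N) (s : Fin N → Fin n → ℝ) {φ : Fin n → ℝ} (hφ : φ ≠ 0)
    {δ : ℝ} (hδ : 0 ≤ δ) :
    innerWorst s φ δ (∫ x, eDot φ x ∂empiricalMeasure s)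
      = (√Var[eDot φ; empiricalMeasure s] + √(δ * ∑ i, φ i ^ 2)) ^ 2 := by
  obtain ⟨r, ρ, hcost, hvar⟩ := exists_split_params (variance_nonneg _ _)
    (by positivity : 0 ≤ δ * ∑ i, φ i ^ 2)
  obtain ⟨Q, hQ, hc, hint, hsq, hmean, hQvar⟩ := exists_otCost_le_variance_eq s r ρ hN hφ hcost
  set B := (√Var[eDot φ; empiricalMeasure s] + √(δ * ∑ i, φ i ^ 2)) ^ 2
  refine le_antisymm (innerWorst_le hN s φ hδ _)
    (le_csSup ⟨B, ?_⟩ ⟨Q, hQ, hc, hint, hsq, hmean, ?_⟩)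
  · rintro _ ⟨Q, hQ, hc, -, hsq, hα, rfl⟩
    exact integral_sq_sub_sq_le_of_otCost_le hN s φ hδ hc hsq hα
  · rw [← hvar, ← hQvar, ← hmean, variance_eq_sub (memLp_eDot_of_integrable_sq φ hsq)]
    rfl

end InnerProblem

/-- **Worst-case inner and middle problem.**
With empirical mean `s̄`, `μ̄ = φ·s̄` and empirical variance `V = φᵀΣφ`, the
maximum over all `α` with `(α − μ̄)² ≤ δ‖φ‖₂²` of the worst-case portfolio
variance `sup{ E^Q[(φ·S)²] − α² : Q ∈ U_δ(Q_N), E^Q[φ·S] = α }` equals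
`(√(φᵀΣφ) + √δ·‖φ‖₂)²`, and the outer maximum is attained at `α* = μ̄`. -/
theorem stmt_3 {n N : ℕ} (hN : 0 < N) (s : Fin N → (Fin n → ℝ))
    (φ : Fin n → ℝ) (hφ : φ ≠ 0) (δ : ℝ) (hδ : 0 < δ) :
    let sbar : Fin n → ℝ := fun j => (N : ℝ)⁻¹ * ∑ i, s i j
    let μbar : ℝ := eDot φ sbar
    let V : ℝ := (N : ℝ)⁻¹ * ∑ i, (eDot φ (s i) - μbar) ^ 2
    let nsq : ℝ := ∑ i, φ i ^ 2
    sSup { v | ∃ α : ℝ, (α - μbar) ^ 2 ≤ δ * nsq ∧ v = innerWorst s φ δ α }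
        = (Real.sqrt V + Real.sqrt δ * Real.sqrt nsq) ^ 2 ∧
      innerWorst s φ δ μbar = (Real.sqrt V + Real.sqrt δ * Real.sqrt nsq) ^ 2 := by
  intro sbar μbar V nsq
  have hmean : ∫ x, eDot φ x ∂empiricalMeasure s = μbar := integral_eDot_empiricalMeasure s φ
  have hvar : Var[eDot φ; empiricalMeasure s] = V := by
    simp only [variance_eDot_empiricalMeasure s hN, sampleDeviation, hmean]
    rfl
  have hmax : innerWorst s φ δ μbar = (√V + √δ * √nsq) ^ 2 := by
    rw [← hmean, innerWorst_mean_eq hN s hφ hδ.le, hvar, Real.sqrt_mul hδ.le]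
  refine ⟨IsGreatest.csSup_eq ⟨⟨μbar, by simp [nsq]; positivity, hmax.symm⟩, ?_⟩, hmax⟩
  rintro _ ⟨α, -, rfl⟩
  rw [← hvar, ← Real.sqrt_mul hδ.le]
  exact innerWorst_le hN s φ hδ.le α
end

section
/- Closed form of the best-case dual inner function: Let φ ∈ ℝⁿ with φ ≠ 0, let λ₁ ≥ 0, λ₂ ∈ ℝ, and r ∈ ℝⁿ. Then sup_{u ∈ ℝⁿ} [ −(φ·u)² − λ₁·‖u − r‖₂² − λ₂·(φ·u) ] = −(φ·r)² − λ₂·(φ·r) + ((2·φ·r + λ₂)²·‖φ‖₂²) / (4·(‖φ‖₂² + λ₁)). -/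
open scoped BigOperators

/-- **Closed form of the best-case dual inner function.**
For `φ ≠ 0`, `λ₁ ≥ 0`, `λ₂ ∈ ℝ` and `r ∈ ℝⁿ`,
`sup_u [ −(φ·u)² − λ₁‖u − r‖₂² − λ₂(φ·u) ]
  = −(φ·r)² − λ₂(φ·r) + (2φ·r + λ₂)²‖φ‖₂² / (4(‖φ‖₂² + λ₁))`. -/
theorem stmt_9 {n : ℕ} (φ : Fin n → ℝ) (hφ : φ ≠ 0) (l₁ l₂ : ℝ) (hl₁ : 0 ≤ l₁)
    (r : Fin n → ℝ) :
    sSup { y | ∃ u : Fin n → ℝ,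
        y = -(eDot φ u) ^ 2 - l₁ * (∑ i, (u i - r i) ^ 2) - l₂ * eDot φ u }
      = -(eDot φ r) ^ 2 - l₂ * eDot φ r
        + ((2 * eDot φ r + l₂) ^ 2 * (∑ i, φ i ^ 2))
          / (4 * ((∑ i, φ i ^ 2) + l₁)) := by
  set P : ℝ := ∑ i, φ i ^ 2 with hPdef
  have hP : 0 < P := by
    rcases Function.ne_iff.mp hφ with ⟨i, hi⟩
    have hi' : φ i ≠ 0 := hi
    have h1 : (0:ℝ) < φ i ^ 2 := by positivity
    have h2 : φ i ^ 2 ≤ P := Finset.single_le_sum (f := fun j => φ j ^ 2)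
      (fun j _ => by positivity) (Finset.mem_univ i)
    linarith
  have hD : 0 < P + l₁ := by linarith
  set s : ℝ := eDot φ r with hsdef
  apply IsGreatest.csSup_eq
  constructor
  · -- membership: optimal u
    set c : ℝ := -(2 * s + l₂) / (2 * (P + l₁)) with hcdef
    refine ⟨fun i => r i + c * φ i, ?_⟩
    have h1 : eDot φ (fun i => r i + c * φ i) = s + c * P := by
      simp only [eDot, hsdef, hPdef, Finset.mul_sum, ← Finset.sum_add_distrib]
      apply Finset.sum_congr rfl
      intro i _
      ring
    have h2 : (∑ i, ((r i + c * φ i) - r i) ^ 2) = c ^ 2 * P := by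
      simp only [hPdef, Finset.mul_sum]
      apply Finset.sum_congr rfl
      intro i _
      ring
    rw [h1, h2, hcdef]
    field_simp
    ring
  · rintro y ⟨u, rfl⟩
    have hcs : (∑ i, φ i * (u i - r i)) ^ 2 ≤ P * (∑ i, (u i - r i) ^ 2) :=
      Finset.sum_mul_sq_le_sq_mul_sq Finset.univ φ (fun i => u i - r i)
    have hx : (∑ i, φ i * (u i - r i)) = eDot φ u - s := by
      simp only [eDot, hsdef, mul_sub]
      rw [Finset.sum_sub_distrib]
    rw [hx] at hcs
    set t : ℝ := eDot φ u
    set Q : ℝ := ∑ i, (u i - r i) ^ 2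
    have hQ : 0 ≤ Q := Finset.sum_nonneg fun i _ => sq_nonneg _
    have hmain : (-(t ^ 2) - l₁ * Q - l₂ * t + s ^ 2 + l₂ * s)
        ≤ (2 * s + l₂) ^ 2 * P / (4 * (P + l₁)) := by
      rw [le_div_iff₀ (by positivity)]
      nlinarith [sq_nonneg ((2 * s + l₂) * P + 2 * (P + l₁) * (t - s)),
        mul_nonneg hl₁ (sub_nonneg.mpr hcs), hP, hD, hQ]
    linarith
end

section
/- Convexity of the parametric value function (S-lemma): Let q₁, q₂ : ℝᵐ → ℝ be nonnegative convex quadratic functions such that the level set { w ∈ ℝᵐ : q₂(w) = t } is nonempty for every t > 0. Then the function f(t) = inf{ q₁(w) : w ∈ ℝᵐ, q₂(w) = t } is convex on (0, ∞). -/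
/-!
Restricted to the line through two points `w₁, w₂`, both quadratics become one-variable
quadratics `pᵢ(s) = aᵢ (s - σᵢ)² + kᵢ`, since nonnegativity forces `aᵢ ≥ 0` and puts them in
vertex form. In these coordinates, `p₂` attains the value `(1 - l) p₂(0) + l p₂(1)` at the
two points `σ₂ ± r`, and the one of them closer to `σ₁` already satisfies
`p₁ ≤ (1 - l) p₁(0) + l p₁(1)`. This hidden convexity of the joint range of `(q₁, q₂)`
passes to the infimum `f`.
-/

open Matrix

lemma exists_vertex_of_forall_quadratic_nonneg {a b c : ℝ}
    (h : ∀ s : ℝ, 0 ≤ a * s ^ 2 + b * s + c) : 0 ≤ a ∧ ∃ τ : ℝ, b = -2 * a * τ := by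
  have hdisc : b ^ 2 ≤ 4 * a * c := by
    have := discrim_le_zero (K := ℝ) (a := a) (b := b) (c := c) fun s => by
      simpa only [sq] using h s
    rw [discrim] at this
    linarith
  have hc : 0 ≤ c := by simpa using h 0
  have h1 : 0 ≤ a + b + c := by simpa using h 1
  have ha : 0 ≤ a := by
    by_contra! ha
    have hb : b = 0 := by nlinarith [sq_nonneg b, mul_nonpos_of_nonpos_of_nonneg ha.le hc]
    have hc0 : c = 0 := by nlinarith [mul_nonpos_of_nonpos_of_nonneg ha.le hc]
    linarith
  refine ⟨ha, ?_⟩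
  rcases ha.eq_or_lt with rfl | ha
  · exact ⟨0, by nlinarith [sq_nonneg b]⟩
  · exact ⟨-b / (2 * a), by field_simp⟩

lemma exists_sq_sub_eq_and_sq_sub_le (σ τ : ℝ) {l : ℝ} (hl0 : 0 ≤ l) (hl1 : l ≤ 1) :
    ∃ s : ℝ, (s - σ) ^ 2 = (1 - l) * σ ^ 2 + l * (1 - σ) ^ 2 ∧
      (s - τ) ^ 2 ≤ (1 - l) * τ ^ 2 + l * (1 - τ) ^ 2 := by
  set r := √((1 - l) * σ ^ 2 + l * (1 - σ) ^ 2)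
  have hr : r ^ 2 = (1 - l) * σ ^ 2 + l * (1 - σ) ^ 2 := Real.sq_sqrt (by positivity)
  have habs : |σ - l| ≤ r := Real.abs_le_sqrt (by nlinarith [mul_nonneg hl0 (sub_nonneg.2 hl1)])
  obtain ⟨hlσ, hσl⟩ := abs_le.1 habs
  -- of the two solutions `σ ± r`, the one on the side of `τ` works since `r ≥ |σ - l|`
  rcases le_total τ σ with hτσ | hστ
  · refine ⟨σ - r, by rw [← hr]; ring, ?_⟩
    nlinarith [mul_le_mul_of_nonneg_left hσl (sub_nonneg.2 hτσ)]
  · refine ⟨σ + r, by rw [← hr]; ring, ?_⟩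
    nlinarith [mul_le_mul_of_nonneg_left hlσ (sub_nonneg.2 hστ)]

lemma exists_quadratic_eq_and_le {a₁ b₁ c₁ a₂ b₂ c₂ l : ℝ}
    (h₁ : ∀ s : ℝ, 0 ≤ a₁ * s ^ 2 + b₁ * s + c₁) (h₂ : ∀ s : ℝ, 0 ≤ a₂ * s ^ 2 + b₂ * s + c₂)
    (hl0 : 0 ≤ l) (hl1 : l ≤ 1) :
    ∃ s : ℝ, a₂ * s ^ 2 + b₂ * s + c₂ = (1 - l) * c₂ + l * (a₂ + b₂ + c₂) ∧
      a₁ * s ^ 2 + b₁ * s + c₁ ≤ (1 - l) * c₁ + l * (a₁ + b₁ + c₁) := by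
  obtain ⟨ha₁, τ, rfl⟩ := exists_vertex_of_forall_quadratic_nonneg h₁
  obtain ⟨-, σ, rfl⟩ := exists_vertex_of_forall_quadratic_nonneg h₂
  obtain ⟨s, hs₂, hs₁⟩ := exists_sq_sub_eq_and_sq_sub_le σ τ hl0 hl1
  refine ⟨s, by linear_combination a₂ * hs₂, ?_⟩
  nlinarith [mul_le_mul_of_nonneg_left hs₁ ha₁]

lemma dotProduct_mulVec_add_smul {n : Type*} [Fintype n] (A : Matrix n n ℝ) (b : n → ℝ)
    (c : ℝ) (w d : n → ℝ) (s : ℝ) :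
    (w + s • d) ⬝ᵥ A *ᵥ (w + s • d) + b ⬝ᵥ (w + s • d) + c
      = (d ⬝ᵥ A *ᵥ d) * s ^ 2 + (w ⬝ᵥ A *ᵥ d + d ⬝ᵥ A *ᵥ w + b ⬝ᵥ d) * s
        + (w ⬝ᵥ A *ᵥ w + b ⬝ᵥ w + c) := by
  simp only [mulVec_add, mulVec_smul, dotProduct_add, add_dotProduct, dotProduct_smul,
    smul_dotProduct, smul_eq_mul]
  ring

lemma exists_eq_and_le_of_quadratic_on_lines {E : Type*} [AddCommGroup E] [Module ℝ E]
    {q₁ q₂ : E → ℝ}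
    (hq₁ : ∀ w d : E, ∃ a b : ℝ, ∀ s : ℝ, q₁ (w + s • d) = a * s ^ 2 + b * s + q₁ w)
    (hq₂ : ∀ w d : E, ∃ a b : ℝ, ∀ s : ℝ, q₂ (w + s • d) = a * s ^ 2 + b * s + q₂ w)
    (hq₁_nonneg : ∀ w, 0 ≤ q₁ w) (hq₂_nonneg : ∀ w, 0 ≤ q₂ w)
    (w₁ w₂ : E) {l : ℝ} (hl0 : 0 ≤ l) (hl1 : l ≤ 1) :
    ∃ w, q₂ w = (1 - l) * q₂ w₁ + l * q₂ w₂ ∧ q₁ w ≤ (1 - l) * q₁ w₁ + l * q₁ w₂ := by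
  obtain ⟨a₁, b₁, he₁⟩ := hq₁ w₁ (w₂ - w₁)
  obtain ⟨a₂, b₂, he₂⟩ := hq₂ w₁ (w₂ - w₁)
  have hw₂ : w₁ + (1 : ℝ) • (w₂ - w₁) = w₂ := by simp
  have h₁ : q₁ w₂ = a₁ + b₁ + q₁ w₁ := by rw [← hw₂, he₁]; ring
  have h₂ : q₂ w₂ = a₂ + b₂ + q₂ w₁ := by rw [← hw₂, he₂]; ring
  obtain ⟨s, hs₂, hs₁⟩ := exists_quadratic_eq_and_le
    (fun s => he₁ s ▸ hq₁_nonneg _) (fun s => he₂ s ▸ hq₂_nonneg _) hl0 hl1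
  exact ⟨w₁ + s • (w₂ - w₁), by rw [he₂, hs₂, h₂], by rw [he₁, h₁]; exact hs₁⟩

lemma convexOn_sInf_of_exists_eq_and_le {E : Type*} {q₁ q₂ : E → ℝ} {S : Set ℝ}
    (hS : Convex ℝ S) (hq₁ : BddBelow (Set.range q₁)) (hS_level : ∀ t ∈ S, ∃ w, q₂ w = t)
    (hcomb : ∀ (w₁ w₂ : E) (l : ℝ), 0 ≤ l → l ≤ 1 →
      ∃ w, q₂ w = (1 - l) * q₂ w₁ + l * q₂ w₂ ∧ q₁ w ≤ (1 - l) * q₁ w₁ + l * q₁ w₂) :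
    ConvexOn ℝ S (fun t => sInf {z | ∃ w, q₂ w = t ∧ z = q₁ w}) := by
  set f := fun t => sInf {z | ∃ w, q₂ w = t ∧ z = q₁ w}
  have hbdd (t : ℝ) : BddBelow {z | ∃ w, q₂ w = t ∧ z = q₁ w} := by
    obtain ⟨B, hB⟩ := hq₁
    refine ⟨B, ?_⟩
    rintro _ ⟨w, -, rfl⟩
    exact hB ⟨w, rfl⟩
  have hnear {t : ℝ} (ht : t ∈ S) {ε : ℝ} (hε : 0 < ε) : ∃ w, q₂ w = t ∧ q₁ w < f t + ε := by
    obtain ⟨w, hw⟩ := hS_level t ht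
    obtain ⟨_, ⟨w, hw, rfl⟩, hlt⟩ := exists_lt_of_csInf_lt (s := {z | ∃ w, q₂ w = t ∧ z = q₁ w})
      ⟨q₁ w, w, hw, rfl⟩ (lt_add_of_pos_right (f t) hε)
    exact ⟨w, hw, hlt⟩
  refine ⟨hS, fun x hx y hy a b ha hb hab => le_of_forall_pos_le_add fun ε hε => ?_⟩
  obtain ⟨w₁, hw₁, hlt₁⟩ := hnear hx hε
  obtain ⟨w₂, hw₂, hlt₂⟩ := hnear hy hε
  obtain ⟨w, hw, hle⟩ := hcomb w₁ w₂ b hb (by linarith)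
  rw [show 1 - b = a by linarith] at hw hle
  rw [hw₁, hw₂] at hw
  calc f (a • x + b • y) ≤ q₁ w := csInf_le (hbdd _) ⟨w, hw, rfl⟩
    _ ≤ a * q₁ w₁ + b * q₁ w₂ := hle
    _ ≤ a * (f x + ε) + b * (f y + ε) := by gcongr
    _ = a • f x + b • f y + ε := by simp only [smul_eq_mul]; linear_combination ε * hab

theorem stmt_13_general {m : ℕ} (A₁ A₂ : Matrix (Fin m) (Fin m) ℝ)
    (b₁ b₂ : Fin m → ℝ) (c₁ c₂ : ℝ) :
    let q₁ : (Fin m → ℝ) → ℝ := fun w => w ⬝ᵥ A₁.mulVec w + b₁ ⬝ᵥ w + c₁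
    let q₂ : (Fin m → ℝ) → ℝ := fun w => w ⬝ᵥ A₂.mulVec w + b₂ ⬝ᵥ w + c₂
    (∀ w, 0 ≤ q₁ w) → (∀ w, 0 ≤ q₂ w) →
    (∀ t : ℝ, 0 < t → ∃ w, q₂ w = t) →
    ConvexOn ℝ (Set.Ioi (0 : ℝ))
      (fun t => sInf { z | ∃ w : Fin m → ℝ, q₂ w = t ∧ z = q₁ w }) := by
  intro q₁ q₂ hq₁ hq₂ hlevel
  refine convexOn_sInf_of_exists_eq_and_le (convex_Ioi 0) ⟨0, by rintro _ ⟨w, rfl⟩; exact hq₁ w⟩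
    hlevel fun w₁ w₂ l hl0 hl1 => ?_
  exact exists_eq_and_le_of_quadratic_on_lines
    (fun w d => ⟨_, _, dotProduct_mulVec_add_smul A₁ b₁ c₁ w d⟩)
    (fun w d => ⟨_, _, dotProduct_mulVec_add_smul A₂ b₂ c₂ w d⟩) hq₁ hq₂ w₁ w₂ hl0 hl1

/-- **Convexity of the parametric value function (S-lemma).**
Let `q₁(w) = wᵀA₁w + b₁ᵀw + c₁` and `q₂(w) = wᵀA₂w + b₂ᵀw + c₂` be nonnegative
convex quadratic functions on `ℝᵐ` (convexity expressed by positive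
semidefiniteness of the symmetric matrices `A₁`, `A₂`) such that the level set
`{ w : q₂(w) = t }` is nonempty for every `t > 0`.  Then
`f(t) = inf{ q₁(w) : q₂(w) = t }` is convex on `(0, ∞)`. -/
theorem stmt_13 {m : ℕ} (A₁ A₂ : Matrix (Fin m) (Fin m) ℝ)
    (b₁ b₂ : Fin m → ℝ) (c₁ c₂ : ℝ)
    (hA₁ : A₁.PosSemidef) (hA₂ : A₂.PosSemidef) :
    let q₁ : (Fin m → ℝ) → ℝ := fun w => w ⬝ᵥ A₁.mulVec w + b₁ ⬝ᵥ w + c₁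
    let q₂ : (Fin m → ℝ) → ℝ := fun w => w ⬝ᵥ A₂.mulVec w + b₂ ⬝ᵥ w + c₂
    (∀ w, 0 ≤ q₁ w) → (∀ w, 0 ≤ q₂ w) →
    (∀ t : ℝ, 0 < t → ∃ w, q₂ w = t) →
    ConvexOn ℝ (Set.Ioi (0 : ℝ))
      (fun t => sInf { z | ∃ w : Fin m → ℝ, q₂ w = t ∧ z = q₁ w }) :=
  stmt_13_general A₁ A₂ b₁ b₂ c₁ c₂
end
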